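/- Assume 𝔼ξ = 0, 𝔼‖ξ‖² < ∞, 1 − 𝔼α_m ∼ a/m, 1 − 𝔼α_m² ∼ 2a/m and β_m ∼ 1/√m as m → ∞. If 𝔼τ^{(m)} → ∞ as m → ∞, then for every u ∈ ℝ^d: lim_{m→∞} m · 𝔼 ⟨u, Y^{(m)}⟩² 𝟙{Y^{(m)} ∈ γ_m A} = 0. -/

import Mathlib

open MeasureTheory ProbabilityTheory Filter Set Asymptotics
open scoped ENNReal NNReal Topology Pointwise RealInnerProductSpace Classical

noncomputable section

/-- The AR(1) sequence `X₀ = 0`, `X_{t+1} = α_{t+1} X_t + β ξ_{t+1}`. -/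
def ARChain {Ω : Type*} {d : ℕ} (α : ℕ → Ω → ℝ) (β : ℝ)
    (ξ : ℕ → Ω → EuclideanSpace ℝ (Fin d)) : ℕ → Ω → EuclideanSpace ℝ (Fin d)
  | 0 => fun _ => 0
  | (t + 1) => fun ω => α (t + 1) ω • ARChain α β ξ t ω + β • ξ (t + 1) ω

/-- First hitting time `min {t ≥ 1 : X_t ∈ S}`, valued in `ℕ∞`. -/
def hitTime {Ω E : Type*} (X : ℕ → Ω → E) (S : Set E) (ω : Ω) : ℕ∞ :=
  sInf {n : ℕ∞ | ∃ t : ℕ, n = t ∧ 1 ≤ t ∧ X t ω ∈ S}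

/-- The stationary distribution `π(·) = (1/𝔼τ) 𝔼 ∑_{j≥1} 𝟙{X_j ∈ ·} 𝟙{τ ≥ j}`. -/
def statMeasure {Ω E : Type*} [MeasurableSpace Ω] [MeasurableSpace E]
    (P : Measure Ω) (X : ℕ → Ω → E) (τ : Ω → ℕ∞) : Measure E :=
  (∫⁻ ω, (τ ω : ℝ≥0∞) ∂P)⁻¹ •
    Measure.sum (fun j : ℕ =>
      if 1 ≤ j then (P.restrict {ω | (j : ℕ∞) ≤ τ ω}).map (X j) else 0)

/-- The covariance matrix `Σ = 𝔼 ξ ξᵀ`. -/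
def covMat {Ω : Type*} [MeasurableSpace Ω] (P : Measure Ω) {d : ℕ}
    (ξ : Ω → EuclideanSpace ℝ (Fin d)) : Matrix (Fin d) (Fin d) ℝ :=
  Matrix.of fun i j => ∫ ω, ξ ω i * ξ ω j ∂P

/-- The quadratic form `uᵀ M u`. -/
def quadForm {d : ℕ} (M : Matrix (Fin d) (Fin d) ℝ)
    (u : EuclideanSpace ℝ (Fin d)) : ℝ :=
  ∑ i, ∑ j, u i * M i j * u j

section auxlemmas
variable {Ω E : Type*}

lemma one_le_hitTime (X : ℕ → Ω → E) (S : Set E) (ω : Ω) : 1 ≤ hitTime X S ω :=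
  le_sInf (by rintro n ⟨t, rfl, ht, -⟩; exact_mod_cast ht)

lemma hitTime_le {X : ℕ → Ω → E} {S : Set E} {ω : Ω} {t : ℕ} (h1 : 1 ≤ t)
    (h2 : X t ω ∈ S) : hitTime X S ω ≤ t :=
  sInf_le ⟨t, rfl, h1, h2⟩

lemma le_hitTime_iff {X : ℕ → Ω → E} {S : Set E} {ω : Ω} {j : ℕ} :
    (j : ℕ∞) ≤ hitTime X S ω ↔ ∀ t : ℕ, 1 ≤ t → t < j → X t ω ∉ S := by
  constructor
  · intro h t h1 h2 hmem
    have h3 := h.trans (hitTime_le h1 hmem)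
    exact absurd (Nat.cast_le.mp h3) (by omega)
  · intro h
    refine le_sInf ?_
    rintro n ⟨t, rfl, h1, hmem⟩
    refine Nat.cast_le.mpr ?_
    by_contra hc
    exact h t h1 (by omega) hmem

lemma measurableSet_le_hitTime [MeasurableSpace Ω] [MeasurableSpace E]
    {X : ℕ → Ω → E} {S : Set E} (hX : ∀ t, Measurable (X t)) (hS : MeasurableSet S)
    (j : ℕ) : MeasurableSet {ω | (j : ℕ∞) ≤ hitTime X S ω} := by
  have : {ω | (j : ℕ∞) ≤ hitTime X S ω}
      = ⋂ (t : ℕ), ⋂ (_ : 1 ≤ t ∧ t < j), (X t) ⁻¹' Sᶜ := by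
    ext ω
    simp only [Set.mem_setOf_eq, le_hitTime_iff, Set.mem_iInter, Set.mem_preimage,
      Set.mem_compl_iff, and_imp]
  rw [this]
  exact MeasurableSet.iInter fun t => MeasurableSet.iInter fun _ => (hX t) hS.compl

lemma arChain_measurable [MeasurableSpace Ω] {d : ℕ} (α : ℕ → Ω → ℝ) (b : ℝ)
    (ξ : ℕ → Ω → EuclideanSpace ℝ (Fin d))
    (hα : ∀ t, Measurable (α t)) (hξ : ∀ t, Measurable (ξ t)) (t : ℕ) :
    Measurable (ARChain α b ξ t) := by
  induction t with
  | zero => exact measurable_const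
  | succ t ih =>
      exact ((hα (t + 1)).smul ih).add ((hξ (t + 1)).const_smul b)

end auxlemmas

set_option maxHeartbeats 1000000

/-- Lemma 2 (i): if `𝔼τ^{(m)} → ∞`, then
`m 𝔼⟨u,Y^{(m)}⟩² 𝟙{Y^{(m)} ∈ γ_m A} → 0` for every `u`. -/
theorem statement10
    {Ω : Type*} [MeasurableSpace Ω] (P : Measure Ω) [IsProbabilityMeasure P]
    (d : ℕ) (hd : 0 < d) (a : ℝ) (ha : 0 < a)
    (αc : ℕ → ℕ → Ω → ℝ) (β : ℕ → ℝ) (ξ : ℕ → Ω → EuclideanSpace ℝ (Fin d))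
    (γ : ℕ → ℝ) (hγ : ∀ m, 0 < γ m)
    (hαmeas : ∀ m t, Measurable (αc m t)) (hξmeas : ∀ t, Measurable (ξ t))
    (hαpos : ∀ m t, ∀ᵐ ω ∂P, 0 < αc m t ω)
    (hβpos : ∀ m, 0 < β m)
    -- i.i.d. structure of the driving sequences, for every m
    (hindep : ∀ m, iIndepFun
      (fun t ω => (αc m t ω, ξ t ω)) P)
    (hpair : ∀ m t, IndepFun (αc m t) (ξ t) P)
    (hidα : ∀ m t, IdentDistrib (αc m t) (αc m 1) P P)
    (hidξ : ∀ t, IdentDistrib (ξ t) (ξ 1) P P)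
    -- moments of the α's and the scaling assumptions (1)
    (hαint : ∀ m, Integrable (αc m 1) P)
    (hαsqint : ∀ m, Integrable (fun ω => (αc m 1 ω) ^ 2) P)
    (hαasym : (fun m : ℕ => 1 - ∫ ω, αc m 1 ω ∂P) ~[atTop] fun m : ℕ => a / m)
    (hα2asym : (fun m : ℕ => 1 - ∫ ω, (αc m 1 ω) ^ 2 ∂P) ~[atTop]
      fun m : ℕ => 2 * a / m)
    (hβasym : (fun m : ℕ => β m) ~[atTop] fun m : ℕ => 1 / Real.sqrt m)
    -- standing assumptions making Y^{(m)} well defined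
    (hαIco : ∀ m, 0 < P {ω | αc m 1 ω ∈ Set.Ico ((d : ℝ) / ((d : ℝ) + 1)) 1})
    (hαmean : ∀ m, ∫ ω, αc m 1 ω ∂P < 1)
    -- the set A
    (A : Set (EuclideanSpace ℝ (Fin d))) (hA : MeasurableSet A)
    (r₁ r₂ : ℝ) (hr₁ : 0 < r₁) (hr₁₂ : r₁ ≤ r₂)
    (hAsub : Metric.ball (0 : EuclideanSpace ℝ (Fin d)) r₁ ⊆ A)
    (hAsup : A ⊆ Metric.ball (0 : EuclideanSpace ℝ (Fin d)) r₂)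
    -- assumptions on ξ
    (hξint : Integrable (ξ 1) P) (hξmean : ∫ ω, ξ 1 ω ∂P = 0)
    (hξsq : Integrable (fun ω => ‖ξ 1 ω‖ ^ 2) P)
    -- Y^{(m)} has the stationary distribution of the restarted chain
    (Y : ℕ → Ω → EuclideanSpace ℝ (Fin d)) (hYmeas : ∀ m, Measurable (Y m))
    (hYlaw : ∀ m, P.map (Y m) =
      statMeasure P (ARChain (αc m) (β m) ξ)
        (hitTime (ARChain (αc m) (β m) ξ) (γ m • A)))
    (u : EuclideanSpace ℝ (Fin d))
    -- 𝔼 τ^{(m)} → ∞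
    (hτinf : Tendsto (fun m => ∫⁻ ω, (hitTime (ARChain (αc m) (β m) ξ) (γ m • A) ω : ℝ≥0∞) ∂P) atTop (nhds ⊤)) :
    Tendsto (fun m : ℕ => (m : ℝ) * ∫ ω, (if Y m ω ∈ γ m • A then ⟪u, Y m ω⟫ ^ 2 else 0) ∂P) atTop (nhds 0) := by
  have hr₁0 : r₁ ≠ 0 := hr₁.ne'
  set K : ℝ := ‖u‖ ^ 2 * (1 + r₂ ^ 2 / r₁ ^ 2) with hKdef
  have hK0 : 0 ≤ K := by rw [hKdef]; positivity
  have hKu : ‖u‖ ^ 2 ≤ K := by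
    rw [hKdef]
    nlinarith [sq_nonneg ‖u‖, div_nonneg (sq_nonneg r₂) (sq_nonneg r₁)]
  have hKur : ‖u‖ ^ 2 * (r₂ ^ 2 / r₁ ^ 2) ≤ K := by
    rw [hKdef]
    nlinarith [sq_nonneg ‖u‖]
  set Sig0 : ℝ≥0∞ := ∫⁻ ω, ENNReal.ofReal (‖ξ 1 ω‖ ^ 2) ∂P with hSigdef
  have hSigtop : Sig0 ≠ ⊤ := by
    have h1 : Sig0 = ∫⁻ ω, ENNReal.ofReal ‖(‖ξ 1 ω‖ ^ 2)‖ ∂P := by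
      rw [hSigdef]
      refine lintegral_congr fun ω => ?_
      rw [Real.norm_of_nonneg (by positivity)]
    rw [h1]
    exact (hasFiniteIntegral_iff_norm _ |>.mp hξsq.2).ne
  -- the key per-m bound
  have key : ∀ m : ℕ,
      (∫ ω, (if Y m ω ∈ γ m • A then ⟪u, Y m ω⟫ ^ 2 else 0) ∂P)
        ≤ ((∫⁻ ω, (hitTime (ARChain (αc m) (β m) ξ) (γ m • A) ω : ℝ≥0∞) ∂P)⁻¹).toReal
            * (K * β m ^ 2) * Sig0.toReal := by
    intro m
    have hγm := hγ m
    have hβm := hβpos m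
    have hY := hYlaw m
    set G := γ m • A with hG
    set X : ℕ → Ω → EuclideanSpace ℝ (Fin d) := ARChain (αc m) (β m) ξ with hXdef
    set τ : Ω → ℕ∞ := hitTime X G with hτdef
    have hXmeas : ∀ t, Measurable (X t) := arChain_measurable _ _ _ (hαmeas m) hξmeas
    have hGmeas : MeasurableSet G := by
      have hGe : G = (fun y : EuclideanSpace ℝ (Fin d) => (γ m)⁻¹ • y) ⁻¹' A := by
        ext y; exact Set.mem_smul_set_iff_inv_smul_mem₀ hγm.ne' A y
      rw [hGe]; exact hA.preimage (measurable_const_smul _)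
    set g : EuclideanSpace ℝ (Fin d) → ℝ≥0∞ :=
      fun y => ENNReal.ofReal (if y ∈ G then ⟪u, y⟫ ^ 2 else 0) with hgdef
    have hinner : Measurable fun y : EuclideanSpace ℝ (Fin d) => ⟪u, y⟫ ^ 2 :=
      (Measurable.inner measurable_const measurable_id).pow_const 2
    have hgmeas : Measurable g := by
      rw [hgdef]
      exact ENNReal.measurable_ofReal.comp (Measurable.ite hGmeas hinner measurable_const)
    have hSmeas : ∀ j : ℕ, MeasurableSet {ω | (j : ℕ∞) ≤ τ ω} :=
      fun j => measurableSet_le_hitTime hXmeas hGmeas j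
    have hSanti : ∀ i j : ℕ, i ≤ j →
        {ω | (j : ℕ∞) ≤ τ ω} ⊆ {ω | (i : ℕ∞) ≤ τ ω} := by
      intro i j hij ω hω
      simp only [Set.mem_setOf_eq] at hω ⊢
      exact le_trans (by exact_mod_cast hij : (i : ℕ∞) ≤ (j : ℕ∞)) hω
    set B : ℕ → Set Ω :=
      fun j => {ω | (j : ℕ∞) ≤ τ ω} \ {ω | ((j + 1 : ℕ) : ℕ∞) ≤ τ ω} with hBdef
    have hBmeas : ∀ j, MeasurableSet (B j) := fun j => (hSmeas j).diff (hSmeas (j + 1))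
    have hBdisj : Pairwise (Function.onFun Disjoint B) := by
      intro i j hij
      rcases lt_or_gt_of_ne hij with hlt | hgt
      · refine Set.disjoint_left.mpr ?_
        rintro ω ⟨-, hi2⟩ ⟨hj1, -⟩
        exact hi2 (hSanti (i + 1) j (by omega) hj1)
      · refine Set.disjoint_right.mpr ?_
        rintro ω ⟨-, hj2⟩ ⟨hi1, -⟩
        exact hj2 (hSanti (j + 1) i (by omega) hi1)
    set h : Ω → ℝ≥0∞ :=
      fun ω => ENNReal.ofReal (K * β m ^ 2) * ENNReal.ofReal (‖ξ 1 ω‖ ^ 2) with hhdef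
    -- pointwise bound
    have hpt : ∀ j : ℕ, 1 ≤ j → ∀ ω,
        ({ω | (j : ℕ∞) ≤ τ ω}).indicator (fun ω => g (X j ω)) ω ≤ (B j).indicator h ω := by
      intro j hj ω
      by_cases hωS : ω ∈ {ω | (j : ℕ∞) ≤ τ ω}
      swap
      · simp [Set.indicator_of_notMem hωS]
      rw [Set.indicator_of_mem hωS]
      by_cases hXj : X j ω ∈ G
      swap
      · simp only [hgdef, if_neg hXj, ENNReal.ofReal_zero]
        exact zero_le
      have hτle : τ ω ≤ (j : ℕ∞) := hitTime_le hj hXj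
      have hωB : ω ∈ B j := by
        refine ⟨hωS, fun hc => ?_⟩
        have h5 : ((j + 1 : ℕ) : ℕ∞) ≤ (j : ℕ∞) := le_trans hc hτle
        exact absurd (Nat.cast_le.mp h5) (by omega)
      rw [Set.indicator_of_mem hωB]
      have hX1 : X 1 ω = β m • ξ 1 ω := by
        show ARChain (αc m) (β m) ξ 1 ω = _
        simp [ARChain]
      have hnorm1 : ‖X 1 ω‖ = β m * ‖ξ 1 ω‖ := by
        rw [hX1, norm_smul, Real.norm_eq_abs, abs_of_pos hβm]
      have hmain : ⟪u, X j ω⟫ ^ 2 ≤ K * β m ^ 2 * ‖ξ 1 ω‖ ^ 2 := by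
        have hcs : |⟪u, X j ω⟫| ≤ ‖u‖ * ‖X j ω‖ := abs_real_inner_le_norm u _
        have hcs2 : ⟪u, X j ω⟫ ^ 2 ≤ ‖u‖ ^ 2 * ‖X j ω‖ ^ 2 := by
          rw [← sq_abs]
          nlinarith [abs_nonneg ⟪u, X j ω⟫, norm_nonneg u, norm_nonneg (X j ω)]
        rcases eq_or_lt_of_le hj with hj1 | hj2
        · -- j = 1
          have hj1' : j = 1 := hj1.symm
          subst hj1'
          calc ⟪u, X 1 ω⟫ ^ 2 ≤ ‖u‖ ^ 2 * ‖X 1 ω‖ ^ 2 := hcs2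
            _ = ‖u‖ ^ 2 * (β m ^ 2 * ‖ξ 1 ω‖ ^ 2) := by rw [hnorm1]; ring
            _ ≤ K * β m ^ 2 * ‖ξ 1 ω‖ ^ 2 := by
                nlinarith [mul_nonneg (sq_nonneg (β m)) (sq_nonneg ‖ξ 1 ω‖)]
        · -- 2 ≤ j
          have hX1out : X 1 ω ∉ G := le_hitTime_iff.mp hωS 1 le_rfl (by omega)
          have hX1big : γ m * r₁ ≤ ‖X 1 ω‖ := by
            by_contra hc
            push_neg at hc
            apply hX1out
            have hball : (γ m)⁻¹ • X 1 ω ∈ Metric.ball (0 : EuclideanSpace ℝ (Fin d)) r₁ := by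
              rw [mem_ball_zero_iff, norm_smul, Real.norm_eq_abs,
                abs_of_pos (inv_pos.mpr hγm), inv_mul_lt_iff₀ hγm]
              linarith [hc]
            have hmem : (γ m)⁻¹ • X 1 ω ∈ A := hAsub hball
            have h6 := Set.smul_mem_smul_set (a := γ m) hmem
            rwa [smul_inv_smul₀ hγm.ne'] at h6
          have hXjsmall : ‖X j ω‖ ≤ γ m * r₂ := by
            obtain ⟨y, hyA, hy⟩ := hXj
            have hy2 : ‖y‖ < r₂ := mem_ball_zero_iff.mp (hAsup hyA)
            rw [← hy, norm_smul, Real.norm_eq_abs, abs_of_pos hγm]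
            exact mul_le_mul_of_nonneg_left hy2.le hγm.le
          have h2 : (γ m * r₁) ^ 2 ≤ β m ^ 2 * ‖ξ 1 ω‖ ^ 2 := by
            rw [hnorm1] at hX1big
            nlinarith [mul_pos hγm hr₁]
          calc ⟪u, X j ω⟫ ^ 2 ≤ ‖u‖ ^ 2 * ‖X j ω‖ ^ 2 := hcs2
            _ ≤ ‖u‖ ^ 2 * (γ m * r₂) ^ 2 :=
                mul_le_mul_of_nonneg_left
                  (pow_le_pow_left₀ (norm_nonneg _) hXjsmall 2) (sq_nonneg ‖u‖)
            _ = (‖u‖ ^ 2 * (r₂ ^ 2 / r₁ ^ 2)) * ((γ m * r₁) ^ 2) := by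
                field_simp
            _ ≤ (‖u‖ ^ 2 * (r₂ ^ 2 / r₁ ^ 2)) * (β m ^ 2 * ‖ξ 1 ω‖ ^ 2) := by
                refine mul_le_mul_of_nonneg_left h2 (by positivity)
            _ ≤ K * (β m ^ 2 * ‖ξ 1 ω‖ ^ 2) := by
                refine mul_le_mul_of_nonneg_right hKur (by positivity)
            _ = K * β m ^ 2 * ‖ξ 1 ω‖ ^ 2 := by ring
      calc g (X j ω) = ENNReal.ofReal (⟪u, X j ω⟫ ^ 2) := by
              rw [hgdef]; simp only [if_pos hXj]
        _ ≤ ENNReal.ofReal (K * β m ^ 2 * ‖ξ 1 ω‖ ^ 2) := ENNReal.ofReal_le_ofReal hmain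
        _ = h ω := by
              simp only [hhdef]
              rw [← ENNReal.ofReal_mul (mul_nonneg hK0 (sq_nonneg _))]
    -- the lintegral bound
    have hL : (∫⁻ ω, g (Y m ω) ∂P)
        ≤ (∫⁻ ω, (τ ω : ℝ≥0∞) ∂P)⁻¹ * (ENNReal.ofReal (K * β m ^ 2) * Sig0) := by
      rw [← lintegral_map hgmeas (hYmeas m), hY]
      unfold statMeasure
      rw [lintegral_smul_measure, lintegral_sum_measure]
      refine mul_le_mul_right ?_ _
      calc (∑' j : ℕ, ∫⁻ y, g y
              ∂(if 1 ≤ j then (P.restrict {ω | (j : ℕ∞) ≤ τ ω}).map (X j) else 0))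
          ≤ ∑' j : ℕ, ∫⁻ ω in B j, h ω ∂P := by
            refine ENNReal.tsum_le_tsum fun j => ?_
            rcases Nat.eq_zero_or_pos j with hj0 | hj1
            · subst hj0
              rw [if_neg (by omega)]
              simp
            · rw [if_pos (by omega : 1 ≤ j), lintegral_map hgmeas (hXmeas j)]
              calc ∫⁻ ω in {ω | (j : ℕ∞) ≤ τ ω}, g (X j ω) ∂P
                  = ∫⁻ ω, ({ω | (j : ℕ∞) ≤ τ ω}).indicator (fun ω => g (X j ω)) ω ∂P :=
                    (lintegral_indicator (hSmeas j) _).symm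
                _ ≤ ∫⁻ ω, (B j).indicator h ω ∂P := lintegral_mono (hpt j hj1)
                _ = ∫⁻ ω in B j, h ω ∂P := lintegral_indicator (hBmeas j) _
        _ = ∫⁻ ω in ⋃ j, B j, h ω ∂P := (lintegral_iUnion hBmeas hBdisj h).symm
        _ ≤ ∫⁻ ω, h ω ∂P := lintegral_mono' Measure.restrict_le_self le_rfl
        _ = ENNReal.ofReal (K * β m ^ 2) * Sig0 := by
            rw [hhdef, hSigdef]
            exact lintegral_const_mul _
              (ENNReal.measurable_ofReal.comp (((hξmeas 1).norm).pow_const 2))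
    -- convert to real integrals
    have hnn : 0 ≤ᵐ[P] fun ω => (if Y m ω ∈ G then ⟪u, Y m ω⟫ ^ 2 else 0) :=
      Filter.Eventually.of_forall fun ω => by
        by_cases hc : Y m ω ∈ G
        · simp only [if_pos hc]; positivity
        · simp [hc]
    have hsm : AEStronglyMeasurable (fun ω => (if Y m ω ∈ G then ⟪u, Y m ω⟫ ^ 2 else 0)) P := by
      refine Measurable.aestronglyMeasurable ?_
      exact Measurable.ite ((hYmeas m) hGmeas) (hinner.comp (hYmeas m)) measurable_const
    have hYint : (∫ ω, (if Y m ω ∈ G then ⟪u, Y m ω⟫ ^ 2 else 0) ∂P)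
        = (∫⁻ ω, g (Y m ω) ∂P).toReal := by
      rw [integral_eq_lintegral_of_nonneg_ae hnn hsm]
    have hEne : (∫⁻ ω, (τ ω : ℝ≥0∞) ∂P) ≠ 0 := by
      have h1 : (1 : ℝ≥0∞) ≤ ∫⁻ ω, (τ ω : ℝ≥0∞) ∂P := by
        have h2 : ∀ ω, (1 : ℝ≥0∞) ≤ (τ ω : ℝ≥0∞) := fun ω => by
          have := one_le_hitTime X G ω
          exact_mod_cast this
        calc (1 : ℝ≥0∞) = ∫⁻ _, 1 ∂P := by simp
          _ ≤ ∫⁻ ω, (τ ω : ℝ≥0∞) ∂P := lintegral_mono h2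
      intro hc
      rw [hc] at h1
      exact (by simp at h1)
    have hBne : (∫⁻ ω, (τ ω : ℝ≥0∞) ∂P)⁻¹ * (ENNReal.ofReal (K * β m ^ 2) * Sig0) ≠ ⊤ :=
      ENNReal.mul_ne_top (ENNReal.inv_ne_top.mpr hEne)
        (ENNReal.mul_ne_top ENNReal.ofReal_ne_top hSigtop)
    rw [hYint]
    refine le_trans (ENNReal.toReal_mono hBne hL) ?_
    rw [ENNReal.toReal_mul, ENNReal.toReal_mul,
      ENNReal.toReal_ofReal (by exact mul_nonneg hK0 (sq_nonneg _))]
    exact le_of_eq (by ring)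
  -- nonnegativity
  have hnonneg : ∀ m : ℕ,
      0 ≤ (m : ℝ) * ∫ ω, (if Y m ω ∈ γ m • A then ⟪u, Y m ω⟫ ^ 2 else 0) ∂P := by
    intro m
    refine mul_nonneg (Nat.cast_nonneg m) (integral_nonneg fun ω => ?_)
    by_cases hc : Y m ω ∈ γ m • A
    · simp only [if_pos hc]; positivity
    · simp [hc]
  have hbound : ∀ m : ℕ,
      (m : ℝ) * ∫ ω, (if Y m ω ∈ γ m • A then ⟪u, Y m ω⟫ ^ 2 else 0) ∂P
        ≤ (m : ℝ) * (((∫⁻ ω, (hitTime (ARChain (αc m) (β m) ξ) (γ m • A) ω : ℝ≥0∞) ∂P)⁻¹).toReal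
            * (K * β m ^ 2) * Sig0.toReal) :=
    fun m => mul_le_mul_of_nonneg_left (key m) (Nat.cast_nonneg m)
  -- limits
  have hinv : Tendsto (fun m : ℕ =>
      ((∫⁻ ω, (hitTime (ARChain (αc m) (β m) ξ) (γ m • A) ω : ℝ≥0∞) ∂P)⁻¹).toReal)
      atTop (𝓝 0) := by
    have h1 := ENNReal.tendsto_inv_iff.mpr hτinf
    rw [ENNReal.inv_top] at h1
    have h2 := (ENNReal.tendsto_toReal (a := 0) (by simp)).comp h1
    simpa [Function.comp_def] using h2
  have hmb : Tendsto (fun m : ℕ => (m : ℝ) * β m ^ 2) atTop (𝓝 1) := by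
    have hne : ∀ᶠ m : ℕ in atTop, (1 / Real.sqrt m) ≠ 0 := by
      filter_upwards [eventually_ge_atTop 1] with m hm
      have : (0:ℝ) < Real.sqrt m := Real.sqrt_pos.mpr (by exact_mod_cast hm)
      positivity
    have h1 : Tendsto (fun m : ℕ => β m / (1 / Real.sqrt m)) atTop (𝓝 1) := by
      have := (isEquivalent_iff_tendsto_one hne).mp hβasym
      simpa [Pi.div_def] using this
    have h1' : Tendsto (fun m : ℕ => β m * Real.sqrt m) atTop (𝓝 1) := by
      refine Tendsto.congr' ?_ h1
      refine Filter.Eventually.of_forall fun m => ?_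
      show β m / (1 / Real.sqrt (m : ℝ)) = β m * Real.sqrt (m : ℝ)
      rw [one_div, div_inv_eq_mul]
    have h2 := h1'.mul h1'
    rw [mul_one] at h2
    refine Tendsto.congr' (Filter.Eventually.of_forall fun m => ?_) h2
    have h3 : Real.sqrt m * Real.sqrt m = (m : ℝ) := Real.mul_self_sqrt (Nat.cast_nonneg m)
    linear_combination (β m) ^ 2 * h3
  have hg0 : Tendsto (fun m : ℕ =>
      (m : ℝ) * (((∫⁻ ω, (hitTime (ARChain (αc m) (β m) ξ) (γ m • A) ω : ℝ≥0∞) ∂P)⁻¹).toReal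
          * (K * β m ^ 2) * Sig0.toReal)) atTop (𝓝 0) := by
    have h4 := (hmb.mul_const (K * Sig0.toReal)).mul hinv
    rw [mul_zero] at h4
    refine Tendsto.congr' (Filter.Eventually.of_forall fun m => ?_) h4
    ring
  exact squeeze_zero hnonneg hbound hg0


end
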